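/- arXiv:2508.16734 — 4 statements merged into one kernel-verified Lean document; each statement's English description precedes it below -/
import Mathlib

section
/- Let π_old and π̂ be probability vectors with strictly positive entries on the (n-1)-simplex, g ∈ ℝⁿ, γ, τ > 0. The minimizer of π ↦ ⟨γg, π⟩ + KL(π ‖ π_old) + γτ·KL(π ‖ π̂) over the simplex is given componentwise by the softmax formula: π_new,i ∝ (π_old,i · π̂ᵢ^{γτ})^{1/(1+γτ)} · exp(-γgᵢ/(1+γτ)); equivalently π_new = Softmax( log π_old - (γ/(1+γτ))·(g + τ·log(π_old/π̂)) ). -/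
open Finset InformationTheory

/-!
Completing the square in the entropic sense: on the simplex the objective equals
`(1 + γτ) · (KL(p ‖ σ) - log Z)`, where `σ = Softmax v` for the logits `v` of the claimed formula
and `Z = ∑ exp v`. Gibbs' inequality `KL(p ‖ σ) ≥ 0`, with equality only at `p = σ`, then forces
every minimizer to be `σ`.
-/

section

open Real

noncomputable def softmax {ι : Type*} [Fintype ι] (v : ι → ℝ) (i : ι) : ℝ :=
  exp (v i) / ∑ j, exp (v j)

section Softmax

variable {ι : Type*} [Fintype ι] [Nonempty ι]

lemma sum_exp_pos (v : ι → ℝ) : 0 < ∑ j, exp (v j) :=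
  sum_pos (fun j _ => exp_pos (v j)) univ_nonempty

lemma softmax_pos (v : ι → ℝ) (i : ι) : 0 < softmax v i :=
  div_pos (exp_pos _) (sum_exp_pos v)

lemma sum_softmax (v : ι → ℝ) : ∑ i, softmax v i = 1 := by
  unfold softmax
  rw [← sum_div, div_self (sum_exp_pos v).ne']

lemma log_softmax (v : ι → ℝ) (i : ι) :
    log (softmax v i) = v i - log (∑ j, exp (v j)) := by
  rw [softmax, log_div (exp_pos _).ne' (sum_exp_pos v).ne', log_exp]

end Softmax

lemma mul_log_div_eq {x y : ℝ} (hy : y ≠ 0) : x * log (x / y) = x * (log x - log y) := by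
  rcases eq_or_ne x 0 with rfl | hx
  · simp
  · rw [log_div hx hy]

lemma mul_log_div_add_sub_eq_mul_klFun {p q : ℝ} (hq : q ≠ 0) :
    p * log (p / q) + q - p = q * klFun (p / q) := by
  rw [klFun_apply]
  field_simp

section Gibbs

variable {ι : Type*} [Fintype ι]

theorem eq_of_sum_mul_log_div_nonpos {p q : ι → ℝ} (hp : ∀ i, 0 ≤ p i) (hq : ∀ i, 0 < q i)
    (hp_sum : ∑ i, p i = ∑ i, q i) (hKL : ∑ i, p i * log (p i / q i) ≤ 0) : p = q := by
  have hterm_nonneg : ∀ i ∈ univ, 0 ≤ q i * klFun (p i / q i) := fun i _ =>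
    mul_nonneg (hq i).le (klFun_nonneg (div_nonneg (hp i) (hq i).le))
  have hsum_zero : ∑ i, q i * klFun (p i / q i) = 0 := by
    refine le_antisymm ?_ (sum_nonneg hterm_nonneg)
    simp_rw [← mul_log_div_add_sub_eq_mul_klFun (hq _).ne']
    rw [sum_sub_distrib, sum_add_distrib, hp_sum]
    linarith
  funext i
  have hi := (sum_eq_zero_iff_of_nonneg hterm_nonneg).mp hsum_zero i (mem_univ i)
  rwa [mul_eq_zero, or_iff_right (hq i).ne', klFun_eq_zero_iff (div_nonneg (hp i) (hq i).le),
    div_eq_one_iff_eq (hq i).ne'] at hi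

lemma sum_mul_log_sub_eq [Nonempty ι] (v p : ι → ℝ) (hp_sum : ∑ i, p i = 1) :
    ∑ i, p i * (log (p i) - v i)
      = ∑ i, p i * log (p i / softmax v i) - log (∑ j, exp (v j)) := by
  simp_rw [mul_log_div_eq (softmax_pos v _).ne', log_softmax, mul_sub, sum_sub_distrib,
    ← sum_mul, hp_sum, one_mul]
  ring

theorem eq_softmax_of_sum_mul_log_sub_le [Nonempty ι] {v p : ι → ℝ} (hp : ∀ i, 0 ≤ p i)
    (hp_sum : ∑ i, p i = 1)
    (hle : ∑ i, p i * (log (p i) - v i)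
      ≤ ∑ i, softmax v i * (log (softmax v i) - v i)) :
    p = softmax v := by
  have hself : ∑ i, softmax v i * log (softmax v i / softmax v i) = 0 :=
    sum_eq_zero fun i _ => by rw [div_self (softmax_pos v i).ne', log_one, mul_zero]
  rw [sum_mul_log_sub_eq v p hp_sum, sum_mul_log_sub_eq v _ (sum_softmax v), hself] at hle
  exact eq_of_sum_mul_log_div_nonpos hp (softmax_pos v) (by rw [hp_sum, sum_softmax])
    (by linarith)

end Gibbs

noncomputable def klProxLogits {ι : Type*} (g pold phat : ι → ℝ) (γ τ : ℝ) (i : ι) : ℝ :=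
  log (pold i) - γ / (1 + γ * τ) * (g i + τ * log (pold i / phat i))

lemma kl_prox_objective_eq {ι : Type*} [Fintype ι] (g pold phat p : ι → ℝ) {γ τ : ℝ}
    (hc : 1 + γ * τ ≠ 0) (hold : ∀ i, pold i ≠ 0) (hhat : ∀ i, phat i ≠ 0) :
    (∑ i, γ * g i * p i) + (∑ i, p i * log (p i / pold i))
        + γ * τ * (∑ i, p i * log (p i / phat i))
      = (1 + γ * τ) * ∑ i, p i * (log (p i) - klProxLogits g pold phat γ τ i) := by
  rw [mul_sum, mul_sum, ← sum_add_distrib, ← sum_add_distrib]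
  refine sum_congr rfl fun i _ => ?_
  rw [mul_log_div_eq (hold i), mul_log_div_eq (hhat i), klProxLogits,
    log_div (hold i) (hhat i)]
  field_simp
  ring

end

theorem kl_prox_softmax_closed_form_general {n : ℕ} (g πold πhat πnew : Fin n → ℝ)
    (γ τ : ℝ) (hγ : 0 < γ) (hτ : 0 < τ)
    (hold : ∀ i, 0 < πold i) (hhat : ∀ i, 0 < πhat i)
    (hnew_mem : (∀ i, 0 ≤ πnew i) ∧ ∑ i, πnew i = 1)
    (hmin : ∀ π : Fin n → ℝ, (∀ i, 0 ≤ π i) → (∑ i, π i = 1) →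
      (∑ i, γ * g i * πnew i) + (∑ i, πnew i * Real.log (πnew i / πold i))
        + γ * τ * (∑ i, πnew i * Real.log (πnew i / πhat i))
      ≤ (∑ i, γ * g i * π i) + (∑ i, π i * Real.log (π i / πold i))
        + γ * τ * (∑ i, π i * Real.log (π i / πhat i))) :
    ∀ i, πnew i =
      Real.exp (Real.log (πold i)
          - (γ / (1 + γ * τ)) * (g i + τ * Real.log (πold i / πhat i)))
        / ∑ j, Real.exp (Real.log (πold j)
          - (γ / (1 + γ * τ)) * (g j + τ * Real.log (πold j / πhat j))) := by
  intro i
  have : Nonempty (Fin n) := ⟨i⟩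
  have hc : 0 < 1 + γ * τ := by positivity
  set v := klProxLogits g πold πhat γ τ
  obtain ⟨hnew_nonneg, hnew_sum⟩ := hnew_mem
  have hle := hmin (softmax v) (fun j => (softmax_pos v j).le) (sum_softmax v)
  simp only [kl_prox_objective_eq _ _ _ _ hc.ne' (fun j => (hold j).ne')
    (fun j => (hhat j).ne')] at hle
  have hnew : πnew = softmax v :=
    eq_softmax_of_sum_mul_log_sub_le hnew_nonneg hnew_sum (le_of_mul_le_mul_left hle hc)
  exact congrFun hnew i

/-- The KL-regularized mirror step on the simplex has a softmax closed form:
the minimizer of `π ↦ ⟪γg, π⟫ + KL(π‖π_old) + γτ·KL(π‖π̂)` over the simplex is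
`π_new = Softmax(log π_old - (γ/(1+γτ))·(g + τ·log(π_old/π̂)))`. -/
theorem kl_prox_softmax_closed_form {n : ℕ} (g πold πhat πnew : Fin n → ℝ)
    (γ τ : ℝ) (hγ : 0 < γ) (hτ : 0 < τ)
    (hold : ∀ i, 0 < πold i) (hhat : ∀ i, 0 < πhat i)
    (holds : ∑ i, πold i = 1) (hhats : ∑ i, πhat i = 1)
    (hnew_mem : (∀ i, 0 ≤ πnew i) ∧ ∑ i, πnew i = 1)
    (hmin : ∀ π : Fin n → ℝ, (∀ i, 0 ≤ π i) → (∑ i, π i = 1) →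
      (∑ i, γ * g i * πnew i) + (∑ i, πnew i * Real.log (πnew i / πold i))
        + γ * τ * (∑ i, πnew i * Real.log (πnew i / πhat i))
      ≤ (∑ i, γ * g i * π i) + (∑ i, π i * Real.log (π i / πold i))
        + γ * τ * (∑ i, π i * Real.log (π i / πhat i))) :
    ∀ i, πnew i =
      Real.exp (Real.log (πold i)
          - (γ / (1 + γ * τ)) * (g i + τ * Real.log (πold i / πhat i)))
        / ∑ j, Real.exp (Real.log (πold j)
          - (γ / (1 + γ * τ)) * (g j + τ * Real.log (πold j / πhat j))) :=
  kl_prox_softmax_closed_form_general g πold πhat πnew γ τ hγ hτ hold hhat hnew_mem hmin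
end

section
/- Suppose each fᵢ : ℝᵈ → ℝ (i = 1,…,n) is convex with Lᵢ-Lipschitz gradient and is Kᵢ-Lipschitz. Define on Z = ℝᵈ × Δ_{n-1} the operator F(θ, π) = (Σᵢ πᵢ∇fᵢ(θ), (-f₁(θ), …, -fₙ(θ))). Then for the norm ‖(θ,π)‖² = ‖θ‖₂² + ‖π‖₁² and its dual, F is L_F-Lipschitz with L_F² ≤ 4·( maxᵢ Lᵢ² + maxᵢ Kᵢ² ). -/
open Finset
open scoped RealInnerProductSpace

/-! The mixed gradient splits as `∑ π₁ᵢ (∇fᵢ(θ₁) - ∇fᵢ(θ₂)) + ∑ (π₁ᵢ - π₂ᵢ) ∇fᵢ(θ₂)`. The first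
sum is at most `maxᵢ Lᵢ · ‖θ₁ - θ₂‖` because `π₁` is a probability vector, the second at most
`maxᵢ Kᵢ · ‖π₁ - π₂‖₁` because a `Kᵢ`-Lipschitz function has gradients of norm at most `Kᵢ`;
likewise each `|fᵢ(θ₁) - fᵢ(θ₂)| ≤ maxᵢ Kᵢ · ‖θ₁ - θ₂‖`. Squaring and `(x + y)² ≤ 2x² + 2y²`
give the constant `4 (maxᵢ Lᵢ² + maxᵢ Kᵢ²)`. -/

theorem HasGradientAt.norm_le_of_abs_sub_le {E : Type*} [NormedAddCommGroup E]
    [InnerProductSpace ℝ E] [CompleteSpace E] {f : E → ℝ} {g x : E} {K : ℝ}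
    (hf : HasGradientAt f g x) (hK₀ : 0 ≤ K) (hK : ∀ y z, |f y - f z| ≤ K * ‖y - z‖) :
    ‖g‖ ≤ K := by
  have hlip : LipschitzWith (Real.toNNReal K) f :=
    LipschitzWith.of_dist_le' fun y z => by
      rw [Real.dist_eq, dist_eq_norm]
      exact hK y z
  simpa only [LinearIsometryEquiv.norm_map, Real.coe_toNNReal K hK₀] using
    hf.hasFDerivAt.le_of_lipschitz hlip

theorem norm_sum_smul_sub_sum_smul_le {ι E : Type*} [NormedAddCommGroup E] [NormedSpace ℝ E]
    (s : Finset ι) {π₁ π₂ : ι → ℝ} {u v : ι → E} {α β : ℝ}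
    (hπ₁ : ∀ i ∈ s, 0 ≤ π₁ i) (hπ₁s : ∑ i ∈ s, π₁ i = 1)
    (huv : ∀ i ∈ s, ‖u i - v i‖ ≤ α) (hv : ∀ i ∈ s, ‖v i‖ ≤ β) :
    ‖∑ i ∈ s, π₁ i • u i - ∑ i ∈ s, π₂ i • v i‖ ≤ α + β * ∑ i ∈ s, |π₁ i - π₂ i| := by
  have hsplit : ∑ i ∈ s, π₁ i • u i - ∑ i ∈ s, π₂ i • v i
      = ∑ i ∈ s, π₁ i • (u i - v i) + ∑ i ∈ s, (π₁ i - π₂ i) • v i := by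
    rw [← sum_add_distrib, ← sum_sub_distrib]
    exact sum_congr rfl fun i _ => by module
  have hmix : ‖∑ i ∈ s, π₁ i • (u i - v i)‖ ≤ α :=
    calc ‖∑ i ∈ s, π₁ i • (u i - v i)‖
        ≤ ∑ i ∈ s, π₁ i * α := norm_sum_le_of_le s fun i hi => by
          rw [norm_smul, Real.norm_of_nonneg (hπ₁ i hi)]
          exact mul_le_mul_of_nonneg_left (huv i hi) (hπ₁ i hi)
      _ = α := by rw [← sum_mul, hπ₁s, one_mul]
  have hshift : ‖∑ i ∈ s, (π₁ i - π₂ i) • v i‖ ≤ β * ∑ i ∈ s, |π₁ i - π₂ i| :=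
    calc ‖∑ i ∈ s, (π₁ i - π₂ i) • v i‖
        ≤ ∑ i ∈ s, |π₁ i - π₂ i| * β := norm_sum_le_of_le s fun i hi => by
          rw [norm_smul, Real.norm_eq_abs]
          exact mul_le_mul_of_nonneg_left (hv i hi) (abs_nonneg _)
      _ = β * ∑ i ∈ s, |π₁ i - π₂ i| := by rw [← sum_mul, mul_comm]
  rw [hsplit]
  exact (norm_add_le _ _).trans (add_le_add hmix hshift)

theorem two_mul_sq_add_two_mul_sq_le {A B a b p q : ℝ} (hA₀ : 0 ≤ A) (hB₀ : 0 ≤ B)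
    (hA : A ≤ p * a + q * b) (hB : B ≤ q * a) :
    2 * A ^ 2 + 2 * B ^ 2 ≤ 4 * (p ^ 2 + q ^ 2) * (a ^ 2 + b ^ 2) := by
  have hA2 : A ^ 2 ≤ (p * a + q * b) ^ 2 := pow_le_pow_left₀ hA₀ hA 2
  have hB2 : B ^ 2 ≤ (q * a) ^ 2 := pow_le_pow_left₀ hB₀ hB 2
  nlinarith [sq_nonneg (p * a - q * b), sq_nonneg (p * b), sq_nonneg (q * b)]

theorem abs_le_sqrt_sup'_sq {ι : Type*} {s : Finset ι} (hs : s.Nonempty) (g : ι → ℝ)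
    {i : ι} (hi : i ∈ s) : |g i| ≤ √(s.sup' hs fun j => g j ^ 2) :=
  Real.abs_le_sqrt (le_sup' (fun j => g j ^ 2) hi)
theorem saddle_operator_lipschitz_general {d n : ℕ} [NeZero n]
    (f : Fin n → EuclideanSpace ℝ (Fin d) → ℝ)
    (f' : Fin n → EuclideanSpace ℝ (Fin d) → EuclideanSpace ℝ (Fin d))
    (L K : Fin n → ℝ)
    (hgrad : ∀ i θ, HasGradientAt (f i) (f' i θ) θ)
    (hL : ∀ i θ₁ θ₂, ‖f' i θ₁ - f' i θ₂‖ ≤ L i * ‖θ₁ - θ₂‖)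
    (hK : ∀ i θ₁ θ₂, |f i θ₁ - f i θ₂| ≤ K i * ‖θ₁ - θ₂‖) :
    ∀ (θ₁ θ₂ : EuclideanSpace ℝ (Fin d)) (π₁ π₂ : Fin n → ℝ),
      (∀ i, 0 ≤ π₁ i) → (∑ i, π₁ i = 1) →
      (∀ i, 0 ≤ π₂ i) → (∑ i, π₂ i = 1) →
      2 * ‖(∑ i, π₁ i • f' i θ₁) - (∑ i, π₂ i • f' i θ₂)‖^2
        + 2 * (Finset.univ.sup' Finset.univ_nonempty
            (fun i => |f i θ₁ - f i θ₂|))^2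
      ≤ 4 * ((Finset.univ.sup' Finset.univ_nonempty (fun i => (L i)^2))
            + (Finset.univ.sup' Finset.univ_nonempty (fun i => (K i)^2)))
          * (‖θ₁ - θ₂‖^2 + (∑ i, |π₁ i - π₂ i|)^2) := by
  intro θ₁ θ₂ π₁ π₂ hπ₁ hπ₁s _ _
  set P := univ.sup' univ_nonempty fun i => L i ^ 2
  set Q := univ.sup' univ_nonempty fun i => K i ^ 2
  have hscale {c : Fin n → ℝ} {M : ℝ} (hc : ∀ i, |c i| ≤ M) (i : Fin n) {t : ℝ} (ht : 0 ≤ t) :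
      c i * t ≤ M * t :=
    mul_le_mul_of_nonneg_right ((le_abs_self _).trans (hc i)) ht
  have hLP : ∀ i, |L i| ≤ √P := fun i => abs_le_sqrt_sup'_sq _ L (mem_univ i)
  have hKQ : ∀ i, |K i| ≤ √Q := fun i => abs_le_sqrt_sup'_sq _ K (mem_univ i)
  have hgradQ : ∀ i θ, ‖f' i θ‖ ≤ √Q := fun i θ =>
    (hgrad i θ).norm_le_of_abs_sub_le (Real.sqrt_nonneg Q) fun y z =>
      (hK i y z).trans (hscale hKQ i (norm_nonneg _))
  have hθ := norm_sum_smul_sub_sum_smul_le univ (π₂ := π₂) (fun i _ => hπ₁ i) hπ₁s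
    (fun i _ => (hL i θ₁ θ₂).trans (hscale hLP i (norm_nonneg _))) (fun i _ => hgradQ i θ₂)
  have hπ : (univ.sup' univ_nonempty fun i => |f i θ₁ - f i θ₂|) ≤ √Q * ‖θ₁ - θ₂‖ :=
    sup'_le _ _ fun i _ => (hK i θ₁ θ₂).trans (hscale hKQ i (norm_nonneg _))
  have hP : 0 ≤ P := (sq_nonneg (L 0)).trans (le_sup' (fun i => L i ^ 2) (mem_univ 0))
  have hQ : 0 ≤ Q := (sq_nonneg (K 0)).trans (le_sup' (fun i => K i ^ 2) (mem_univ 0))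
  have key := two_mul_sq_add_two_mul_sq_le (norm_nonneg _)
    ((abs_nonneg _).trans (le_sup' (fun i => |f i θ₁ - f i θ₂|) (mem_univ 0))) hθ hπ
  rwa [Real.sq_sqrt hP, Real.sq_sqrt hQ] at key

/-- Lipschitz constant of the saddle operator
`F(θ,π) = (∑ᵢ πᵢ∇fᵢ(θ), (-f₁(θ),…,-fₙ(θ)))` for the product norm
`‖(θ,π)‖² = ‖θ‖₂² + ‖π‖₁²`: using the dual-norm bound
`‖(a,b)‖_*² ≤ 2‖a‖₂² + 2‖b‖_∞²`, one has `L_F² ≤ 4(maxᵢ Lᵢ² + maxᵢ Kᵢ²)`. -/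
theorem saddle_operator_lipschitz {d n : ℕ} [NeZero n]
    (f : Fin n → EuclideanSpace ℝ (Fin d) → ℝ)
    (f' : Fin n → EuclideanSpace ℝ (Fin d) → EuclideanSpace ℝ (Fin d))
    (L K : Fin n → ℝ)
    (hgrad : ∀ i θ, HasGradientAt (f i) (f' i θ) θ)
    (hL : ∀ i θ₁ θ₂, ‖f' i θ₁ - f' i θ₂‖ ≤ L i * ‖θ₁ - θ₂‖)
    (hK : ∀ i θ₁ θ₂, |f i θ₁ - f i θ₂| ≤ K i * ‖θ₁ - θ₂‖)
    (hconv : ∀ i, ConvexOn ℝ Set.univ (f i)) :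
    ∀ (θ₁ θ₂ : EuclideanSpace ℝ (Fin d)) (π₁ π₂ : Fin n → ℝ),
      (∀ i, 0 ≤ π₁ i) → (∑ i, π₁ i = 1) →
      (∀ i, 0 ≤ π₂ i) → (∑ i, π₂ i = 1) →
      2 * ‖(∑ i, π₁ i • f' i θ₁) - (∑ i, π₂ i • f' i θ₂)‖^2
        + 2 * (Finset.univ.sup' Finset.univ_nonempty
            (fun i => |f i θ₁ - f i θ₂|))^2
      ≤ 4 * ((Finset.univ.sup' Finset.univ_nonempty (fun i => (L i)^2))
            + (Finset.univ.sup' Finset.univ_nonempty (fun i => (K i)^2)))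
          * (‖θ₁ - θ₂‖^2 + (∑ i, |π₁ i - π₂ i|)^2) :=
  saddle_operator_lipschitz_general f f' L K hgrad hL hK
end

section
/- Let aₜ, ξₜ be real sequences, bₜ > 0, β₁ ∈ [0,1), and suppose for all t ≥ 0: aₜ ≤ (1/bₜ)(1-β₁)ξₜ + β₁(b_{t-1}/bₜ)a_{t-1} + 2β₁(b_{t-1}/bₜ)η‖d^{t-1}‖² with a₋₁ = 0 and d⁻¹ = 0. Then Σ_{t=0}^{T} aₜ ≤ Σ_{k=0}^{T} Cₖξₖ + 2η·Σ_{k=0}^{T-1} Aₖ‖dᵏ‖², where Cₖ = (1-β₁)Σ_{t=k}^{T} β₁^{t-k}/bₜ and Aₖ = bₖ·Σ_{t=k+1}^{T} β₁^{t-k}/bₜ. -/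
/-!
Rescaling by `bₜ`, the sequence `uₜ = bₜ aₜ` satisfies the linear recursion
`u_{t+1} ≤ β₁ (uₜ + gₜ) + f_{t+1}` with `fₖ = (1-β₁) ξₖ` and `gₖ = 2η bₖ ‖dᵏ‖²`, which unrolls to
`uₜ ≤ ∑_{k ≤ t} β₁^{t-k} fₖ + ∑_{k < t} β₁^{t-k} gₖ`. Dividing by `bₜ`, summing over `t ≤ T` and
exchanging the two summations gives the coefficients `Cₖ` and `Aₖ`.
-/

open Finset

lemma mul_sum_range_pow_sub_mul {R : Type*} [CommSemiring R] (β : R) (h : ℕ → R) {n t : ℕ} (hn : n ≤ t + 1) :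
    β * ∑ k ∈ range n, β ^ (t - k) * h k = ∑ k ∈ range n, β ^ (t + 1 - k) * h k := by
  rw [mul_sum]
  refine sum_congr rfl fun k hk => ?_
  rw [show t + 1 - k = t - k + 1 by grind, pow_succ]
  ring

lemma le_sum_pow_mul_of_le_mul_add {β : ℝ} (hβ : 0 ≤ β) {u f g : ℕ → ℝ} (h0 : u 0 ≤ f 0)
    (hsucc : ∀ t, u (t + 1) ≤ β * (u t + g t) + f (t + 1)) (t : ℕ) :
    u t ≤ ∑ k ∈ range (t + 1), β ^ (t - k) * f k + ∑ k ∈ range t, β ^ (t - k) * g k := by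
  induction t with
  | zero => simpa using h0
  | succ t ih =>
    calc u (t + 1) ≤ β * (u t + g t) + f (t + 1) := hsucc t
      _ ≤ β * (∑ k ∈ range (t + 1), β ^ (t - k) * f k
            + ∑ k ∈ range t, β ^ (t - k) * g k + g t) + f (t + 1) := by gcongr
      _ = ∑ k ∈ range (t + 1 + 1), β ^ (t + 1 - k) * f k
            + ∑ k ∈ range (t + 1), β ^ (t + 1 - k) * g k := by
        rw [sum_range_succ (fun k => β ^ (t + 1 - k) * f k) (t + 1),
          sum_range_succ (fun k => β ^ (t + 1 - k) * g k) t,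
          ← mul_sum_range_pow_sub_mul β f le_rfl, ← mul_sum_range_pow_sub_mul β g (by omega),
          Nat.sub_self, Nat.add_sub_cancel_left]
        ring

section Exchange

variable {M : Type*} [AddCommMonoid M]

lemma sum_range_sum_range_succ_comm (f : ℕ → ℕ → M) (T : ℕ) :
    ∑ t ∈ range (T + 1), ∑ k ∈ range (t + 1), f t k
      = ∑ k ∈ range (T + 1), ∑ t ∈ Icc k T, f t k :=
  sum_comm' fun _ _ => by simp only [mem_range, mem_Icc]; omega

lemma sum_range_sum_range_comm (f : ℕ → ℕ → M) (T : ℕ) :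
    ∑ t ∈ range (T + 1), ∑ k ∈ range t, f t k
      = ∑ k ∈ range T, ∑ t ∈ Icc (k + 1) T, f t k :=
  sum_comm' fun _ _ => by simp only [mem_range, mem_Icc]; omega

end Exchange

theorem adam_sums_estimation_general
    {E : Type*} [NormedAddCommGroup E]
    (a ξ b : ℕ → ℝ) (d : ℕ → E) (β₁ η : ℝ)
    (hβ : 0 ≤ β₁)
    (hb : ∀ t, 0 < b t)
    (h0 : a 0 ≤ (1 / b 0) * (1 - β₁) * ξ 0)
    (hrec : ∀ t, a (t + 1)
      ≤ (1 / b (t + 1)) * (1 - β₁) * ξ (t + 1)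
        + β₁ * (b t / b (t + 1)) * a t
        + 2 * β₁ * (b t / b (t + 1)) * η * ‖d t‖^2) :
    ∀ T, ∑ t ∈ Finset.range (T + 1), a t
      ≤ (∑ k ∈ Finset.range (T + 1),
          ((1 - β₁) * ∑ t ∈ Finset.Icc k T, β₁^(t - k) / b t) * ξ k)
        + 2 * η * ∑ k ∈ Finset.range T,
          (b k * ∑ t ∈ Finset.Icc (k + 1) T, β₁^(t - k) / b t) * ‖d k‖^2 := by
  intro T
  have hu := le_sum_pow_mul_of_le_mul_add hβ (u := fun t => b t * a t)
    (f := fun k => (1 - β₁) * ξ k) (g := fun k => 2 * η * b k * ‖d k‖ ^ 2)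
    (by rw [← le_div_iff₀' (hb 0)]; exact h0.trans_eq (by ring))
    (fun t => by
      rw [← le_div_iff₀' (hb (t + 1))]; exact (hrec t).trans_eq (by ring))
  calc ∑ t ∈ range (T + 1), a t
      ≤ ∑ t ∈ range (T + 1), (∑ k ∈ range (t + 1), β₁ ^ (t - k) * ((1 - β₁) * ξ k)
          + ∑ k ∈ range t, β₁ ^ (t - k) * (2 * η * b k * ‖d k‖ ^ 2)) / b t :=
        sum_le_sum fun t _ => by rw [le_div_iff₀' (hb t)]; exact hu t
    _ = _ := by
      simp only [add_div, sum_add_distrib, sum_div, sum_range_sum_range_succ_comm,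
        sum_range_sum_range_comm, mul_sum, sum_mul]
      congr 1 <;> refine sum_congr rfl fun k _ => sum_congr rfl fun t _ => ?_ <;> ring

/-- Summed form of the recursion on the inner products `aₜ` in the Adam
analysis (Lemma on sums estimation): unrolling
`aₜ ≤ (1/bₜ)(1-β₁)ξₜ + β₁(b_{t-1}/bₜ)a_{t-1} + 2β₁(b_{t-1}/bₜ)η‖d^{t-1}‖²`
and summing yields
`∑ₜ aₜ ≤ ∑ₖ Cₖξₖ + 2η∑ₖ Aₖ‖dᵏ‖²` with
`Cₖ = (1-β₁)∑_{t=k}^T β₁^{t-k}/bₜ` and `Aₖ = bₖ∑_{t=k+1}^T β₁^{t-k}/bₜ`. -/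
theorem adam_sums_estimation
    {E : Type*} [NormedAddCommGroup E]
    (a ξ b : ℕ → ℝ) (d : ℕ → E) (β₁ η : ℝ)
    (hβ : 0 ≤ β₁) (hβ1 : β₁ < 1) (hη : 0 < η)
    (hb : ∀ t, 0 < b t)
    (h0 : a 0 ≤ (1 / b 0) * (1 - β₁) * ξ 0)
    (hrec : ∀ t, a (t + 1)
      ≤ (1 / b (t + 1)) * (1 - β₁) * ξ (t + 1)
        + β₁ * (b t / b (t + 1)) * a t
        + 2 * β₁ * (b t / b (t + 1)) * η * ‖d t‖^2) :
    ∀ T, ∑ t ∈ Finset.range (T + 1), a t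
      ≤ (∑ k ∈ Finset.range (T + 1),
          ((1 - β₁) * ∑ t ∈ Finset.Icc k T, β₁^(t - k) / b t) * ξ k)
        + 2 * η * ∑ k ∈ Finset.range T,
          (b k * ∑ t ∈ Finset.Icc (k + 1) T, β₁^(t - k) / b t) * ‖d k‖^2 :=
  adam_sums_estimation_general a ξ b d β₁ η hβ hb h0 hrec
end

section
/- Let f(x, ·) be concave and L-smooth on a convex set Y, and suppose the mirror-ascent step y_t = argmin_{y ∈ Y} { ⟨-η·g, y⟩ + KL(y ‖ y_{t-1}) } with unbiased stochastic gradient g of variance at most σ² satisfies the three-point inequality together with KL(y_t ‖ y_{t-1}) ≥ ‖y_t - y_{t-1}‖²/2 and η ≤ 1/(2L). Then for any y ∈ Y: E[KL(y ‖ y_t)] ≤ E[KL(y ‖ y_{t-1})] + η·E[f(x_{t-1}, y_t) - f(x_{t-1}, y)] + η²σ². -/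
/-!
For `D(p, q) = φ p + ⟪φ' p, q - p⟫ - φ q`, concavity at `q` gives
`D(p, q) ≤ ⟪φ' p - φ' q, q - p⟫ ≤ L‖q - p‖²`, and splitting the segment
`[p, q]` at its midpoint `m` gives `D(p, q) = D(p, m) + D(m, q) + ⟪φ' p - φ' m, q - m⟫`; iterating
this with the Lipschitz bound on `φ'` sharpens `D(p, q) ≤ L‖q - p‖²` to the smoothness bound
`D(p, q) ≤ L/2 ‖q - p‖²`, with no differentiability of `φ` needed. In the three-point inequality,
the step `Δ = y_t - y_{t-1}` then contributes at most `η (φ y_t - φ y_{t-1}) + ηL/2 ‖Δ‖²` through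
`φ' y_{t-1}`, and at most `‖Δ‖²/4 + η²‖g - φ' y_{t-1}‖²` through the noise (Young); both quadratic
terms are absorbed by `KL(y_t ‖ y_{t-1}) ≥ ‖Δ‖²/2` since `ηL ≤ 1/2`. Taking expectations removes
the noise from the linear term, and concavity bounds `⟪y_{t-1} - y, φ' y_{t-1}⟫` by
`φ y_{t-1} - φ y`.
-/

open MeasureTheory
open scoped RealInnerProductSpace

section SmoothConcave

variable {E : Type*} [NormedAddCommGroup E] [InnerProductSpace ℝ E] {φ : E → ℝ} {φ' : E → E}
  {L : ℝ}

lemma gap_le_mul_sq (hconc : ∀ p q, φ q ≤ φ p + ⟪φ' p, q - p⟫)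
    (hsmooth : ∀ p q, ‖φ' p - φ' q‖ ≤ L * ‖p - q‖) (p q : E) :
    φ p + ⟪φ' p, q - p⟫ - φ q ≤ L * ‖q - p‖ ^ 2 := by
  have hqp := hconc q p
  have hcs : ⟪φ' p - φ' q, q - p⟫ ≤ L * ‖q - p‖ ^ 2 := calc
    _ ≤ ‖φ' p - φ' q‖ * ‖q - p‖ := real_inner_le_norm _ _
    _ ≤ L * ‖p - q‖ * ‖q - p‖ := by gcongr; exact hsmooth p q
    _ = L * ‖q - p‖ ^ 2 := by rw [norm_sub_rev p q]; ring
  have hflip : ⟪φ' q, p - q⟫ = -⟪φ' q, q - p⟫ := by rw [← inner_neg_right, neg_sub]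
  rw [inner_sub_left] at hcs
  linarith

lemma gap_le_of_gap_le (hsmooth : ∀ p q, ‖φ' p - φ' q‖ ≤ L * ‖p - q‖) {c : ℝ}
    (hc : ∀ p q, φ p + ⟪φ' p, q - p⟫ - φ q ≤ c * ‖q - p‖ ^ 2) (p q : E) :
    φ p + ⟪φ' p, q - p⟫ - φ q ≤ (c / 2 + L / 4) * ‖q - p‖ ^ 2 := by
  obtain ⟨h, rfl⟩ : ∃ h : E, q = p + (2 : ℝ) • h :=
    ⟨(2 : ℝ)⁻¹ • (q - p), by rw [smul_smul]; norm_num⟩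
  have hqm : p + (2 : ℝ) • h - (p + h) = h := by module
  have hcross : ⟪φ' p - φ' (p + h), h⟫ ≤ L * ‖h‖ ^ 2 := calc
    _ ≤ ‖φ' p - φ' (p + h)‖ * ‖h‖ := real_inner_le_norm _ _
    _ ≤ L * ‖p - (p + h)‖ * ‖h‖ := by gcongr; exact hsmooth _ _
    _ = L * ‖h‖ ^ 2 := by rw [sub_add_cancel_left, norm_neg]; ring
  have hfirst := hc p (p + h)
  have hsecond := hc (p + h) (p + (2 : ℝ) • h)
  rw [add_sub_cancel_left] at hfirst ⊢
  rw [hqm] at hsecond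
  rw [inner_sub_left] at hcross
  rw [inner_smul_right, norm_smul, Real.norm_two]
  linarith

theorem gap_le_half_mul_sq (hconc : ∀ p q, φ q ≤ φ p + ⟪φ' p, q - p⟫)
    (hsmooth : ∀ p q, ‖φ' p - φ' q‖ ≤ L * ‖p - q‖) (p q : E) :
    φ p + ⟪φ' p, q - p⟫ - φ q ≤ L / 2 * ‖q - p‖ ^ 2 := by
  have hk : ∀ k : ℕ, ∀ p q, φ p + ⟪φ' p, q - p⟫ - φ q
      ≤ (L / 2 + L / 2 * (1 / 2) ^ k) * ‖q - p‖ ^ 2 := by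
    intro k
    induction k with
    | zero => simpa using gap_le_mul_sq hconc hsmooth
    | succ k ih =>
      intro p q
      convert gap_le_of_gap_le hsmooth ih p q using 2
      ring
  have hlim : Filter.Tendsto (fun k : ℕ => (L / 2 + L / 2 * (1 / 2) ^ k) * ‖q - p‖ ^ 2)
      Filter.atTop (nhds (L / 2 * ‖q - p‖ ^ 2)) := by
    have := ((tendsto_pow_atTop_nhds_zero_of_lt_one (by norm_num : (0 : ℝ) ≤ 1 / 2)
      (by norm_num)).const_mul (L / 2)).const_add (L / 2)
    simpa using this.mul_const (‖q - p‖ ^ 2)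
  exact ge_of_tendsto' hlim fun k => hk k p q

end SmoothConcave

lemma inner_step_sub_half_sq_le {E : Type*} [NormedAddCommGroup E] [InnerProductSpace ℝ E]
    {φ : E → ℝ} {φ' : E → E} {L η : ℝ} (hη : 0 ≤ η) (hηL : η * L ≤ 1 / 2) {y₀ y₁ : E}
    (hgap : φ y₀ + ⟪φ' y₀, y₁ - y₀⟫ - φ y₁ ≤ L / 2 * ‖y₁ - y₀‖ ^ 2) (g : E) :
    η * ⟪y₁ - y₀, g⟫ - ‖y₁ - y₀‖ ^ 2 / 2
      ≤ η * (φ y₁ - φ y₀) + η ^ 2 * ‖g - φ' y₀‖ ^ 2 := by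
  set Δ := y₁ - y₀
  set e := g - φ' y₀
  have hsplit : ⟪Δ, g⟫ = ⟪Δ, φ' y₀⟫ + ⟪Δ, e⟫ := by rw [← inner_add_right, add_sub_cancel]
  have hdrift : η * ⟪Δ, φ' y₀⟫ ≤ η * (φ y₁ - φ y₀) + ‖Δ‖ ^ 2 / 4 := by
    rw [real_inner_comm] at hgap
    nlinarith [sq_nonneg ‖Δ‖]
  have hyoung : η * ⟪Δ, e⟫ ≤ ‖Δ‖ ^ 2 / 4 + η ^ 2 * ‖e‖ ^ 2 := by
    nlinarith [real_inner_le_norm Δ e, sq_nonneg (‖Δ‖ / 2 - η * ‖e‖)]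
  rw [hsplit]
  linarith

lemma integral_le_of_forall_le_step_bound {Ω : Type*} [MeasurableSpace Ω] {μ : Measure Ω}
    [IsProbabilityMeasure μ] {E : Type*} [NormedAddCommGroup E] [InnerProductSpace ℝ E]
    [CompleteSpace E] {X F : Ω → ℝ} {g : Ω → E} {a b η : ℝ} {v c : E} (hX : Integrable X μ)
    (hg : Integrable g μ) (hF : Integrable F μ) (hvar : Integrable (fun ω => ‖g ω - c‖ ^ 2) μ)
    (hle : ∀ ω, X ω ≤ a + η * ⟪v, g ω⟫ + η * (F ω - b) + η ^ 2 * ‖g ω - c‖ ^ 2) :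
    ∫ ω, X ω ∂μ ≤ a + η * ⟪v, ∫ ω, g ω ∂μ⟫ + η * (∫ ω, F ω ∂μ - b)
        + η ^ 2 * ∫ ω, ‖g ω - c‖ ^ 2 ∂μ := by
  have hconst : Integrable (fun _ => a) μ := integrable_const a
  have hinner : Integrable (fun ω => η * ⟪v, g ω⟫) μ := (hg.const_inner v).const_mul η
  have hdrift : Integrable (fun ω => η * (F ω - b)) μ :=
    (hF.sub (integrable_const b)).const_mul η
  have hnoise : Integrable (fun ω => η ^ 2 * ‖g ω - c‖ ^ 2) μ := hvar.const_mul _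
  refine (integral_mono hX (((hconst.fun_add hinner).fun_add hdrift).fun_add hnoise) hle).trans
    (le_of_eq ?_)
  rw [integral_add ((hconst.fun_add hinner).fun_add hdrift) hnoise,
    integral_add (hconst.fun_add hinner) hdrift, integral_add hconst hinner, integral_const_mul,
    integral_const_mul, integral_const_mul, integral_inner hg, integral_sub hF (integrable_const b)]
  simp

theorem mirror_ascent_kl_descent_general
    {Ω : Type*} [MeasureSpace Ω] (μ : Measure Ω) [IsProbabilityMeasure μ]
    {n : ℕ} (Y : Set (EuclideanSpace ℝ (Fin n)))
    (KL : EuclideanSpace ℝ (Fin n) → EuclideanSpace ℝ (Fin n) → ℝ)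
    (φ : EuclideanSpace ℝ (Fin n) → ℝ)
    (φ' : EuclideanSpace ℝ (Fin n) → EuclideanSpace ℝ (Fin n))
    (L η σ : ℝ) (hL : 0 < L) (hη : 0 < η) (hηL : η ≤ 1 / (2 * L))
    (hconc : ∀ p q, φ q ≤ φ p + ⟪φ' p, q - p⟫)
    (hsmooth : ∀ p q, ‖φ' p - φ' q‖ ≤ L * ‖p - q‖)
    (yprev : EuclideanSpace ℝ (Fin n))
    (g : Ω → EuclideanSpace ℝ (Fin n))
    (yt : Ω → EuclideanSpace ℝ (Fin n))
    (hint_g : Integrable g μ)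
    (hunbiased : ∫ ω, g ω ∂μ = φ' yprev)
    (hint_var : Integrable (fun ω => ‖g ω - φ' yprev‖^2) μ)
    (hvar : ∫ ω, ‖g ω - φ' yprev‖^2 ∂μ ≤ σ^2)
    (hint_KL : ∀ y, Integrable (fun ω => KL y (yt ω)) μ)
    (hint_φ : Integrable (fun ω => φ (yt ω)) μ)
    (hthree : ∀ ω, ∀ y ∈ Y,
      KL y (yt ω) ≤ η * ⟪yprev - y, g ω⟫ + η * ⟪yt ω - yprev, g ω⟫
        + KL y yprev - KL (yt ω) yprev)
    (hpinsker : ∀ ω, ‖yt ω - yprev‖^2 / 2 ≤ KL (yt ω) yprev) :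
    ∀ y ∈ Y, ∫ ω, KL y (yt ω) ∂μ
      ≤ KL y yprev + η * ((∫ ω, φ (yt ω) ∂μ) - φ y) + η^2 * σ^2 := by
  intro y hy
  have hηL' : η * L ≤ 1 / 2 := by
    rw [le_div_iff₀ (by positivity)] at hηL
    linarith
  have hpointwise : ∀ ω, KL y (yt ω) ≤ KL y yprev + η * ⟪yprev - y, g ω⟫
      + η * (φ (yt ω) - φ yprev) + η ^ 2 * ‖g ω - φ' yprev‖ ^ 2 := fun ω => by
    linarith [hthree ω y hy, hpinsker ω, inner_step_sub_half_sq_le hη.le hηL'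
      (gap_le_half_mul_sq hconc hsmooth yprev (yt ω)) (g ω)]
  have hexpect := integral_le_of_forall_le_step_bound (hint_KL y) hint_g hint_φ hint_var hpointwise
  rw [hunbiased] at hexpect
  have hsuper : ⟪yprev - y, φ' yprev⟫ ≤ φ yprev - φ y := by
    have := hconc yprev y
    rw [real_inner_comm, ← neg_sub y yprev, inner_neg_right]
    linarith
  nlinarith [mul_le_mul_of_nonneg_left hvar (sq_nonneg η)]

/-- One-step descent lemma for the stochastic KL-mirror-ascent update on a
compact convex subset `Y` of the simplex: for any `y ∈ Y`,
`E[KL(y‖y_t)] ≤ KL(y‖y_{t-1}) + η·E[φ(y_t) - φ(y)] + η²σ²`,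
where `φ = f(x_{t-1}, ·)` is concave and `L`-smooth, `η ≤ 1/(2L)`, and the
stochastic gradient `g` is unbiased with variance at most `σ²`. -/
theorem mirror_ascent_kl_descent
    {Ω : Type*} [MeasureSpace Ω] (μ : Measure Ω) [IsProbabilityMeasure μ]
    {n : ℕ} (Y : Set (EuclideanSpace ℝ (Fin n)))
    (hYconv : Convex ℝ Y)
    (hYsimplex : ∀ y ∈ Y, (∀ i, 0 ≤ y i) ∧ ∑ i, y i = 1)
    (KL : EuclideanSpace ℝ (Fin n) → EuclideanSpace ℝ (Fin n) → ℝ)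
    (hKL : ∀ p q, KL p q = ∑ i, p i * Real.log (p i / q i))
    (φ : EuclideanSpace ℝ (Fin n) → ℝ)
    (φ' : EuclideanSpace ℝ (Fin n) → EuclideanSpace ℝ (Fin n))
    (L η σ : ℝ) (hL : 0 < L) (hη : 0 < η) (hηL : η ≤ 1 / (2 * L)) (hσ : 0 ≤ σ)
    (hconc : ∀ p q, φ q ≤ φ p + ⟪φ' p, q - p⟫)
    (hsmooth : ∀ p q, ‖φ' p - φ' q‖ ≤ L * ‖p - q‖)
    (yprev : EuclideanSpace ℝ (Fin n)) (hyprev : yprev ∈ Y)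
    (g : Ω → EuclideanSpace ℝ (Fin n))
    (yt : Ω → EuclideanSpace ℝ (Fin n)) (hyt : ∀ ω, yt ω ∈ Y)
    (hint_g : Integrable g μ)
    (hunbiased : ∫ ω, g ω ∂μ = φ' yprev)
    (hint_var : Integrable (fun ω => ‖g ω - φ' yprev‖^2) μ)
    (hvar : ∫ ω, ‖g ω - φ' yprev‖^2 ∂μ ≤ σ^2)
    (hint_KL : ∀ y, Integrable (fun ω => KL y (yt ω)) μ)
    (hint_φ : Integrable (fun ω => φ (yt ω)) μ)
    (hthree : ∀ ω, ∀ y ∈ Y,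
      KL y (yt ω) ≤ η * ⟪yprev - y, g ω⟫ + η * ⟪yt ω - yprev, g ω⟫
        + KL y yprev - KL (yt ω) yprev)
    (hpinsker : ∀ ω, ‖yt ω - yprev‖^2 / 2 ≤ KL (yt ω) yprev) :
    ∀ y ∈ Y, ∫ ω, KL y (yt ω) ∂μ
      ≤ KL y yprev + η * ((∫ ω, φ (yt ω) ∂μ) - φ y) + η^2 * σ^2 :=
  mirror_ascent_kl_descent_general μ Y KL φ φ' L η σ hL hη hηL hconc hsmooth yprev g yt hint_g
    hunbiased hint_var hvar hint_KL hint_φ hthree hpinsker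
end
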